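/- Let σ ∈ ℝ^{2n+4} have all coordinates nonnegative and satisfy σ₁ + σ₅ + σ₇ + ⋯ + σ_{2n+3} > 0 (positive total kinase). Then there is no nondegenerate interval I ⊆ ℝ and differentiable curve c : I → ℝ^{2n+2} such that, for all t ∈ I: c′(t) = R(σ + Γ·c(t)), all coordinates of σ + Γ·c(t) are nonnegative, and σ₁ − c₁(t) + c_{n+1}(t) = 0. -/

import Mathlib

/-!
The free kinase `x₁` and the complexes `x₅, x₇, …, x_{2n+3}` form the cycle
`K → KS₀ → KS₁ → ⋯ → KS_{n-1} → K`, so their sum, the total kinase, is orthogonal to every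
column of `Γ` and hence conserved.
If `x₁` vanishes on an open interval, so does `x₁' = R_{n+1} - R₁ = k₂x₅ + k_{2n+1}x_{2n+3}`,
a sum of nonnegative terms, whence `x₅ ≡ 0`. Inductively, once `x₁, x₅, …, x_{2j+5}` vanish,
`x_{2j+5}' = R_{j+1} - R_{j+2} = k_{2j+4}x_{2j+7}` forces `x_{2j+7} ≡ 0`. Then the total kinase
vanishes, contradicting its positivity.
-/

open Matrix Finset

noncomputable section

/-- The `m`-th (1-based) standard basis vector of `ℝ^(2n+4)`. -/
def E (n : ℕ) (m : ℕ) : Fin (2*n+4) → ℝ := fun j => if (j : ℕ) + 1 = m then 1 else 0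

/-- The value of a vector `x ∈ ℝ^(2n+4)` at the (1-based) math index `m`. -/
def X (n : ℕ) (x : Fin (2*n+4) → ℝ) (m : ℕ) : ℝ :=
  if h : m - 1 < 2*n+4 then x ⟨m - 1, h⟩ else 0

/-- The stoichiometric matrix `Γ` of the processive `n`-site phosphorylation network;
columns are indexed 1-based as in the paper. -/
def Gamma (n : ℕ) : Matrix (Fin (2*n+4)) (Fin (2*n+2)) ℝ :=
  Matrix.of fun r c0 =>
    (let c := (c0 : ℕ) + 1
     if c = 1 then E n 5 - E n 1 - E n 3
     else if c ≤ n then E n (2*(c-1)+5) - E n (2*(c-1)+3)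
     else if c = n+1 then E n 1 + E n 4 - E n (2*n+3)
     else if c = n+2 then E n (2*n+4) - E n 2 - E n 4
     else if c ≤ 2*n+1 then E n (2*n+4-2*(c-(n+2))) - E n (2*n+6-2*(c-(n+2)))
     else E n 2 + E n 3 - E n 6) r

/-- The mass-action reaction rate function `R : ℝ^(2n+4) → ℝ^(2n+2)` of the processive
`n`-site phosphorylation network (coordinates indexed 1-based). -/
def Rvec (n : ℕ) (k l : ℕ → ℝ) (x : Fin (2*n+4) → ℝ) : Fin (2*n+2) → ℝ := fun a0 =>
  let a := (a0 : ℕ) + 1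
  if a = 1 then k 1 * X n x 1 * X n x 3 - k 2 * X n x 5
  else if a ≤ n then
    k (2*(a-1)+1) * X n x (2*(a-1)+3) - k (2*(a-1)+2) * X n x (2*(a-1)+5)
  else if a = n+1 then k (2*n+1) * X n x (2*n+3)
  else if a = n+2 then l (2*n+1) * X n x 2 * X n x 4 - l (2*n) * X n x (2*n+4)
  else if a ≤ 2*n+1 then
    l (2*(n-(a-(n+2)))+1) * X n x (2*(n-(a-(n+2)))+6)
      - l (2*(n-(a-(n+2)))) * X n x (2*(n-(a-(n+2)))+4)
  else l 1 * X n x 6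

section

variable {n : ℕ}

open Fin.NatCast

lemma X_eq_apply (x : Fin (2*n+4) → ℝ) {m : ℕ} (h : m - 1 < 2*n+4) : X n x m = x ⟨m - 1, h⟩ :=
  dif_pos h

lemma X_add (x y : Fin (2*n+4) → ℝ) (m : ℕ) : X n (x + y) m = X n x m + X n y m := by
  unfold X; split_ifs <;> simp

lemma X_nonneg {x : Fin (2*n+4) → ℝ} (hx : ∀ i, 0 ≤ x i) (m : ℕ) : 0 ≤ X n x m := by
  unfold X; split_ifs
  exacts [hx _, le_rfl]

lemma HasDerivAt.X_apply {f : ℝ → Fin (2*n+4) → ℝ} {f' : Fin (2*n+4) → ℝ} {t : ℝ}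
    (h : HasDerivAt f f' t) (m : ℕ) : HasDerivAt (fun s => X n (f s) m) (X n f' m) t := by
  unfold X; split_ifs
  exacts [hasDerivAt_pi.mp h _, hasDerivAt_const _ _]

lemma HasDerivAt.const_add_mulVec {ι κ : Type*} [Fintype ι] [Fintype κ] {c : ℝ → κ → ℝ}
    {c' : κ → ℝ} {t : ℝ} (σ : ι → ℝ) (M : Matrix ι κ ℝ) (h : HasDerivAt c c' t) :
    HasDerivAt (fun s => σ + M *ᵥ c s) (M *ᵥ c') t :=
  ((LinearMap.toContinuousLinearMap M.mulVecLin).hasFDerivAt.comp_hasDerivAt t h).const_add σ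

lemma HasDerivAt.eq_zero_of_eqOn_zero {f : ℝ → ℝ} {f' t : ℝ} {U : Set ℝ} (hU : IsOpen U)
    (ht : t ∈ U) (hf : ∀ s ∈ U, f s = 0) (h : HasDerivAt f f' t) : f' = 0 :=
  h.unique <| (hasDerivAt_const t 0).congr_of_eventuallyEq <|
    Filter.eventually_of_mem (hU.mem_nhds ht) hf

lemma Gamma_row_kinase (hn : 1 ≤ n) (r : Fin (2*n+4)) (hr : (r : ℕ) = 0) :
    Gamma n r = Pi.single (n : Fin (2*n+2)) 1 - Pi.single 0 1 := by
  ext a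
  simp only [Gamma, of_apply, Pi.sub_apply, Pi.single_apply, Fin.ext_iff, Fin.val_natCast,
    Fin.val_zero, Nat.mod_eq_of_lt (show n < 2*n+2 by omega)]
  split_ifs <;> simp only [E, Pi.add_apply, Pi.sub_apply, hr] <;> split_ifs <;> norm_num <;> omega

lemma Gamma_row_complex {i : ℕ} (hi : i < n) (r : Fin (2*n+4)) (hr : (r : ℕ) = 2*i+4) :
    Gamma n r = Pi.single (i : Fin (2*n+2)) 1 - Pi.single ((i + 1 : ℕ) : Fin (2*n+2)) 1 := by
  ext a
  simp only [Gamma, of_apply, Pi.sub_apply, Pi.single_apply, Fin.ext_iff, Fin.val_natCast,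
    Nat.mod_eq_of_lt (show i < 2*n+2 by omega), Nat.mod_eq_of_lt (show i + 1 < 2*n+2 by omega)]
  split_ifs <;> simp only [E, Pi.add_apply, Pi.sub_apply, hr] <;> split_ifs <;> norm_num <;> omega

lemma X_Gamma_mulVec_one (hn : 1 ≤ n) (v : Fin (2*n+2) → ℝ) :
    X n (Gamma n *ᵥ v) 1 = v n - v 0 := by
  rw [X_eq_apply _ (by omega), mulVec, Gamma_row_kinase hn _ rfl, sub_dotProduct,
    single_dotProduct, single_dotProduct, one_mul, one_mul]

lemma X_Gamma_mulVec_complex {i : ℕ} (hi : i < n) (v : Fin (2*n+2) → ℝ) :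
    X n (Gamma n *ᵥ v) (2*i+5) = v i - v (i + 1 : ℕ) := by
  rw [X_eq_apply _ (by omega), mulVec, Gamma_row_complex hi _ (by simp), sub_dotProduct,
    single_dotProduct, single_dotProduct, one_mul, one_mul]

def totalKinase (n : ℕ) (x : Fin (2*n+4) → ℝ) : ℝ :=
  X n x 1 + ∑ i ∈ range n, X n x (2*i+5)

lemma totalKinase_Gamma_mulVec (hn : 1 ≤ n) (v : Fin (2*n+2) → ℝ) :
    totalKinase n (Gamma n *ᵥ v) = 0 := by
  rw [totalKinase, X_Gamma_mulVec_one hn,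
    sum_congr rfl fun i hi => X_Gamma_mulVec_complex (mem_range.1 hi) v,
    sum_range_sub' (fun i : ℕ => v i), Nat.cast_zero]
  ring

lemma totalKinase_add_Gamma_mulVec (hn : 1 ≤ n) (σ : Fin (2*n+4) → ℝ) (v : Fin (2*n+2) → ℝ) :
    totalKinase n (σ + Gamma n *ᵥ v) = totalKinase n σ := by
  have h := totalKinase_Gamma_mulVec hn v
  simp only [totalKinase, X_add, sum_add_distrib] at h ⊢
  linarith

lemma X_one_add_Gamma_mulVec (hn : 1 ≤ n) (σ : Fin (2*n+4) → ℝ) (v : Fin (2*n+2) → ℝ)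
    {r : Fin (2*n+4)} {a b : Fin (2*n+2)} (hr : (r : ℕ) = 0) (ha : (a : ℕ) = 0) (hb : (b : ℕ) = n) :
    X n (σ + Gamma n *ᵥ v) 1 = σ r - v a + v b := by
  obtain rfl : (n : Fin (2*n+2)) = b := Fin.ext (by rw [Fin.val_cast_of_lt (by omega), hb])
  obtain rfl : 0 = a := Fin.ext ha.symm
  rw [X_add, X_Gamma_mulVec_one hn, X_eq_apply σ (by omega), show ⟨1 - 1, _⟩ = r from Fin.ext hr.symm]
  ring

variable {k l : ℕ → ℝ}

section Rates

variable (x : Fin (2*n+4) → ℝ)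

lemma Rvec_zero : Rvec n k l x 0 = k 1 * X n x 1 * X n x 3 - k 2 * X n x 5 := by
  simp [Rvec]

lemma Rvec_succ {i : ℕ} (hi : i + 1 < n) :
    Rvec n k l x (i + 1 : ℕ) = k (2*i+3) * X n x (2*i+5) - k (2*i+4) * X n x (2*i+7) := by
  simp only [Rvec, Fin.val_natCast, Nat.mod_eq_of_lt (show i + 1 < 2*n+2 by omega),
    Nat.add_sub_cancel]
  rw [if_neg (by omega), if_pos (by omega)]
  rfl

lemma Rvec_last (hn : 1 ≤ n) : Rvec n k l x n = k (2*n+1) * X n x (2*n+3) := by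
  simp only [Rvec, Fin.val_natCast, Nat.mod_eq_of_lt (show n < 2*n+2 by omega)]
  rw [if_neg (by omega), if_neg (by omega), if_pos trivial]

lemma Rvec_eq_zero {i : ℕ} (hi : i < n) (hK : X n x 1 = 0)
    (hC : ∀ j ≤ i, X n x (2*j+5) = 0) : Rvec n k l x i = 0 := by
  cases i with
  | zero => rw [Nat.cast_zero, Rvec_zero, hK, hC 0 le_rfl]; ring
  | succ i =>
    rw [Rvec_succ x hi, hC i (by omega), show 2*i+7 = 2*(i+1)+5 by ring, hC (i + 1) le_rfl]
    ring

end Rates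

theorem complexes_eq_zero_of_kinase_eq_zero (hn : 1 ≤ n)
    (hk : ∀ i, 1 ≤ i → i ≤ 2*n+1 → 0 < k i) {x : ℝ → Fin (2*n+4) → ℝ} {U : Set ℝ}
    (hU : IsOpen U) (hx : ∀ t ∈ U, HasDerivAt x (Gamma n *ᵥ Rvec n k l (x t)) t)
    (hpos : ∀ t ∈ U, ∀ i, 0 ≤ x t i) (hK : ∀ t ∈ U, X n (x t) 1 = 0) :
    ∀ j < n, ∀ t ∈ U, X n (x t) (2*j+5) = 0 := by
  have hflux (m : ℕ) (hm : ∀ t ∈ U, X n (x t) m = 0) (t : ℝ) (ht : t ∈ U) :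
      X n (Gamma n *ᵥ Rvec n k l (x t)) m = 0 :=
    ((hx t ht).X_apply m).eq_zero_of_eqOn_zero hU ht hm
  intro j
  induction j using Nat.strong_induction_on with
  | _ j ih =>
  intro hj t ht
  cases j with
  | zero =>
    have hpos' := X_nonneg (hpos t ht)
    have h := hflux 1 hK t ht
    rw [X_Gamma_mulVec_one hn, Rvec_last _ hn, Rvec_zero, hK t ht] at h
    have hsum : k 2 * X n (x t) 5 + k (2*n+1) * X n (x t) (2*n+3) = 0 := by linarith
    rw [add_eq_zero_iff_of_nonneg (mul_nonneg (hk _ (by omega) (by omega)).le (hpos' _))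
      (mul_nonneg (hk _ (by omega) (by omega)).le (hpos' _))] at hsum
    exact (mul_eq_zero_iff_left (hk 2 (by omega) (by omega)).ne').1 hsum.1
  | succ j =>
    have h := hflux (2*j+5) (ih j (by omega) (by omega)) t ht
    rw [X_Gamma_mulVec_complex (by omega), Rvec_succ _ hj, ih j (by omega) (by omega) t ht,
      Rvec_eq_zero _ (by omega) (hK t ht) fun i hi => ih i (by omega) (by omega) t ht] at h
    have hprod : k (2*j+4) * X n (x t) (2*j+7) = 0 := by linarith
    rw [show 2*(j+1)+5 = 2*j+7 by ring]
    exact (mul_eq_zero_iff_left (hk _ (by omega) (by omega)).ne').1 hprod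

end

/-- If the total amount of kinase `σ₁ + σ₅ + σ₇ + ⋯ + σ_{2n+3}` in the nonnegative
initial condition `σ` is positive, then there is no differentiable curve `c` on a
nondegenerate interval `I` solving `c' = R(σ + Γ·c)` with `σ + Γ·c(t)` nonnegative along
which the first coordinate `σ₁ - c₁ + c_{n+1}` of `σ + Γ·c` vanishes identically. -/
theorem free_kinase_not_identically_zero (n : ℕ) (hn : 1 ≤ n) (k l : ℕ → ℝ)
    (hk : ∀ i, 1 ≤ i → i ≤ 2*n+1 → 0 < k i)
    (σ : Fin (2*n+4) → ℝ)
    (hK : 0 < X n σ 1 + ∑ i ∈ Finset.range n, X n σ (2*i+5)) :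
    ¬ ∃ (I : Set ℝ) (c : ℝ → Fin (2*n+2) → ℝ),
        I.OrdConnected ∧ (∃ t0 ∈ I, ∃ t1 ∈ I, t0 < t1) ∧
        ∀ t ∈ I,
          HasDerivAt c (Rvec n k l (σ + (Gamma n).mulVec (c t))) t ∧
          (∀ i, 0 ≤ (σ + (Gamma n).mulVec (c t)) i) ∧
          σ ⟨0, by omega⟩ - c t ⟨0, by omega⟩ + c t ⟨n, by omega⟩ = 0 := by
  rintro ⟨I, c, hI, ⟨t0, ht0, t1, ht1, hlt⟩, hsol⟩
  have hsub : Set.Ioo t0 t1 ⊆ I := Set.Ioo_subset_Icc_self.trans (hI.out ht0 ht1)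
  have hK0 (t : ℝ) (ht : t ∈ I) : X n (σ + Gamma n *ᵥ c t) 1 = 0 :=
    (X_one_add_Gamma_mulVec hn σ (c t) rfl rfl rfl).trans (hsol t ht).2.2
  have hC := complexes_eq_zero_of_kinase_eq_zero hn hk isOpen_Ioo
    (fun t ht => (hsol t (hsub ht)).1.const_add_mulVec σ (Gamma n))
    (fun t ht => (hsol t (hsub ht)).2.1) (fun t ht => hK0 t (hsub ht))
  obtain ⟨t, ht⟩ := Set.nonempty_Ioo.2 hlt
  have htotal : totalKinase n σ = 0 := by
    rw [← totalKinase_add_Gamma_mulVec hn σ (c t), totalKinase, hK0 t (hsub ht),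
      sum_eq_zero fun i hi => hC i (mem_range.1 hi) t ht, add_zero]
  exact hK.ne' htotal

end
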